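/- If φ and φ' are sequences of pivots, both applicable to a simple graph G, and sup(φ) = sup(φ'), then Gφ = Gφ'. In other words, the result of an applicable sequence of pivots depends only on its support. -/

import Mathlib

set_option linter.unusedSectionVars false

variable {V : Type*} [Fintype V] [DecidableEq V]

/-- Local complementation at a vertex `w`: complement the edges within `N_G(w)`. -/
def SimpleGraph.localComp (G : SimpleGraph V) (w : V) : SimpleGraph V where
  Adj x y := x ≠ y ∧ Xor' (G.Adj x y) (G.Adj x w ∧ G.Adj y w)
  symm := by
    constructor
    intro x y ⟨hne, hx⟩
    refine ⟨hne.symm, ?_⟩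
    have h1 := G.adj_comm x y
    unfold Xor' Xor at hx ⊢
    tauto
  loopless := ⟨by intro x ⟨h, _⟩; exact h rfl⟩

/-- `x ∼_G y` : `x = y` or `{x,y}` is an edge of `G`. -/
def SimpleGraph.nbr (G : SimpleGraph V) (x y : V) : Prop := x = y ∨ G.Adj x y

theorem SimpleGraph.nbr_comm (G : SimpleGraph V) (x y : V) : G.nbr x y ↔ G.nbr y x :=
  or_congr eq_comm (G.adj_comm x y)

private theorem xor_swap_right (a b c : Prop) : Xor' (Xor' a b) c ↔ Xor' (Xor' a c) b := by
  unfold Xor' Xor; tauto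

/-- The pivot `G[uv]` of `G` on an edge `{u,v}`, characterized by
`x ∼_{G[uv]} y ⟺ (x ∼_G y) XOR ((x ∼_G u) ∧ (y ∼_G v)) XOR ((x ∼_G v) ∧ (y ∼_G u))`. -/
def SimpleGraph.pivot (G : SimpleGraph V) (u v : V) : SimpleGraph V where
  Adj x y := x ≠ y ∧
    Xor' (Xor' (G.nbr x y) (G.nbr x u ∧ G.nbr y v)) (G.nbr x v ∧ G.nbr y u)
  symm := by
    constructor
    intro x y ⟨hne, hx⟩
    refine ⟨hne.symm, ?_⟩
    show Xor' (Xor' (G.nbr y x) (G.nbr y u ∧ G.nbr x v)) (G.nbr y v ∧ G.nbr x u)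
    rw [G.nbr_comm y x, and_comm (a := G.nbr y u) (b := G.nbr x v),
      and_comm (a := G.nbr y v) (b := G.nbr x u)]
    exact (xor_swap_right _ _ _).mp hx
  loopless := ⟨by intro x ⟨h, _⟩; exact h rfl⟩

/-- Determinant over GF(2) of the adjacency matrix of the subgraph of `G` induced by `S`. -/
noncomputable def gdet (G : SimpleGraph V) (S : Finset V) : ZMod 2 := by
  classical
  exact Matrix.det (Matrix.of fun i j : S => if G.Adj i j then (1 : ZMod 2) else 0)

/-- Apply a sequence of pivots (left to right). -/
def applyPivots (G : SimpleGraph V) : List (V × V) → SimpleGraph V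
  | [] => G
  | p :: φ => applyPivots (G.pivot p.1 p.2) φ

/-- A sequence of pivots is applicable when each pair is an edge of the graph
obtained by applying all preceding pivots. -/
def PivotsApplicable (G : SimpleGraph V) : List (V × V) → Prop
  | [] => True
  | p :: φ => G.Adj p.1 p.2 ∧ PivotsApplicable (G.pivot p.1 p.2) φ

/-- The support of a sequence of pivots: vertices occurring an odd number of times. -/
def pivotSupport (φ : List (V × V)) : Finset V :=
  Finset.univ.filter fun x => Odd ((φ.flatMap fun p => [p.1, p.2]).count x)

/-- A sequence of pivots is reduced if its pivot vertices are pairwise distinct. -/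
def ReducedSeq (φ : List (V × V)) : Prop := (φ.flatMap fun p => [p.1, p.2]).Nodup

/-- The number of perfect matchings of the subgraph of `G` induced by `S`:
sets of edges of `G` inside `S` such that every vertex of `S` lies in exactly one of them. -/
noncomputable def pmCount (G : SimpleGraph V) (S : Finset V) : ℕ := by
  classical
  exact (Finset.univ.filter fun P : Finset (Sym2 V) =>
    (∀ e ∈ P, e ∈ G.edgeSet ∧ ∀ v ∈ e, v ∈ S) ∧
    ∀ v ∈ S, ∃! e, e ∈ P ∧ v ∈ e).card


/-!
Over `𝔽₂`, encode a graph by its adjacency matrix `A`, and `A` by the graph `{(x, A x)}` of the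
linear map it defines. Pivoting on an edge `uv` is a principal pivot transform: the graph of the
pivoted matrix is the image of `{(x, A x)}` under exchanging the `u`- and `v`-coordinates of `x`
with those of `A x`. Exchanges on `S` and on `T` compose to the exchange on `S ∆ T`, so the graph
of the matrix of `Gφ` is the image of that of `G` under the exchange on `sup(φ)`.
-/

open Function Matrix Set
open scoped symmDiff

section SwapOn

variable {ι R : Type*} [DecidableEq ι]

def swapOn (S : Finset ι) (p : (ι → R) × (ι → R)) : (ι → R) × (ι → R) :=
  (fun i => if i ∈ S then p.2 i else p.1 i, fun i => if i ∈ S then p.1 i else p.2 i)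

@[simp]
lemma swapOn_empty : swapOn (∅ : Finset ι) = (id : (ι → R) × (ι → R) → _) := by
  funext p
  simp [swapOn]

lemma swapOn_swapOn (S T : Finset ι) (p : (ι → R) × (ι → R)) :
    swapOn S (swapOn T p) = swapOn (S ∆ T) p := by
  ext i <;> by_cases hS : i ∈ S <;> by_cases hT : i ∈ T <;>
    simp [swapOn, hS, hT, Finset.mem_symmDiff]

lemma swapOn_involutive (S : Finset ι) : Involutive (swapOn (R := R) S) := fun p => by
  rw [swapOn_swapOn, symmDiff_self, Finset.bot_eq_empty, swapOn_empty, id]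

lemma swapOn_pair_eq_add [Ring R] [CharP R 2] {u v : ι} (huv : u ≠ v) (x y : ι → R) :
    swapOn {u, v} (x, y) =
      (x + (Pi.single u (x u + y u) + Pi.single v (x v + y v)),
        y + (Pi.single u (x u + y u) + Pi.single v (x v + y v))) := by
  ext i
  all_goals
    rcases eq_or_ne i u with rfl | hiu
    · simp [swapOn, huv, add_left_comm, CharTwo.add_cancel_left, CharTwo.add_self_eq_zero]
    rcases eq_or_ne i v with rfl | hiv
    · simp [swapOn, huv.symm, add_left_comm, CharTwo.add_cancel_left, CharTwo.add_self_eq_zero]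
    · simp [swapOn, hiu, hiv]

end SwapOn

lemma image_graphOn_univ_of_mapsTo {α β : Type*} [Finite α] {f g : α → β}
    {σ : α × β → α × β} (hσ : Injective σ)
    (h : MapsTo σ (univ.graphOn f) (univ.graphOn g)) :
    σ '' univ.graphOn f = univ.graphOn g := by
  have hg : ∀ x, σ (x, f x) = ((σ (x, f x)).1, g (σ (x, f x)).1) := fun x =>
    Prod.ext rfl (mem_graphOn.1 (h (x := (x, f x)) (mem_graphOn.2 ⟨trivial, rfl⟩))).2.symm
  have hπ : Surjective fun x => (σ (x, f x)).1 := by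
    refine Finite.injective_iff_surjective.1 fun x₁ x₂ h₁₂ => ?_
    have : σ (x₁, f x₁) = σ (x₂, f x₂) := by rw [hg x₁, hg x₂, h₁₂]
    exact congrArg Prod.fst (hσ this)
  refine (h.image_subset).antisymm ?_
  rintro ⟨y, z⟩ hy
  obtain ⟨-, rfl : g y = z⟩ := mem_graphOn.1 hy
  obtain ⟨x, rfl⟩ := hπ y
  exact ⟨(x, f x), mem_graphOn.2 ⟨trivial, rfl⟩, hg x⟩

section MatrixPivot

variable {ι R : Type*} [Fintype ι] [DecidableEq ι] [CommRing R]

/-- With `A + 1` the matrix of `∼_G`, this is the formula defining `G[uv]`, read over `𝔽₂`. -/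
def Matrix.pivot (A : Matrix ι ι R) (u v : ι) : Matrix ι ι R :=
  A + vecMulVec ((A + 1).col u) ((A + 1).col v) + vecMulVec ((A + 1).col v) ((A + 1).col u)

lemma Matrix.mapsTo_swapOn_graphOn_pivot [CharP R 2] {A : Matrix ι ι R} (hA : A.IsSymm)
    {u v : ι} (huv : u ≠ v) (hAuv : A u v = 1) (hAuu : A u u = 0) (hAvv : A v v = 0) :
    MapsTo (swapOn {u, v}) (univ.graphOn A.mulVec) (univ.graphOn (A.pivot u v).mulVec) := by
  rintro _ ⟨x, -, rfl⟩
  rw [swapOn_pair_eq_add huv, mem_graphOn]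
  refine ⟨trivial, ?_⟩
  set a := x u + (A *ᵥ x) u
  set b := x v + (A *ᵥ x) v
  set d : ι → R := Pi.single u a + Pi.single v b
  have hcol : ∀ i (z : ι → R), (A + 1).col i ⬝ᵥ z = z i + (A *ᵥ z) i := fun i z => by
    have hsymm : (A + 1).col i = (A + 1) i := funext fun j => (hA.add isSymm_one).apply i j
    rw [hsymm]
    change ((A + 1) *ᵥ z) i = _
    rw [add_mulVec, one_mulVec, Pi.add_apply, add_comm]
  have hAd : A *ᵥ (x + d) = A *ᵥ x + a • A.col u + b • A.col v := by
    simp only [d, mulVec_add, mulVec_single, op_smul_eq_smul, add_assoc]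
  have hv : (A + 1).col v ⬝ᵥ (x + d) = a := by
    rw [hcol, hAd]
    simp [d, huv.symm, hA.apply u v, hAuv, hAvv]
    linear_combination b * CharTwo.two_eq_zero (R := R)
  have hu : (A + 1).col u ⬝ᵥ (x + d) = b := by
    rw [hcol, hAd]
    simp [d, huv, hAuv, hAuu]
    linear_combination a * CharTwo.two_eq_zero (R := R)
  rw [pivot, add_mulVec, add_mulVec, vecMulVec_mulVec, vecMulVec_mulVec, hu, hv, hAd]
  ext w
  simp only [d, Pi.add_apply, Pi.smul_apply, op_smul_eq_smul, smul_eq_mul, Matrix.add_apply,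
    col_apply, one_apply, Pi.single_apply, mul_add, mul_ite, mul_one, mul_zero]
  linear_combination (a * A w u + b * A w v) * CharTwo.two_eq_zero (R := R)

end MatrixPivot

lemma ZMod.ite_xor'_eq_add (p q : Prop) [Decidable p] [Decidable q] [Decidable (Xor' p q)] :
    (if Xor' p q then (1 : ZMod 2) else 0) = (if p then 1 else 0) + (if q then 1 else 0) := by
  by_cases hp : p <;> by_cases hq : q <;> simp [hp, hq, Xor']
  decide

namespace SimpleGraph

omit [Fintype V] in
open Classical in
lemma adjMatrix_add_one_apply (G : SimpleGraph V) (x y : V) :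
    (G.adjMatrix (ZMod 2) + 1) x y = if G.nbr x y then 1 else 0 := by
  by_cases h : x = y <;> simp [nbr, one_apply, h]

open Classical in
lemma adjMatrix_pivot (G : SimpleGraph V) (u v : V) :
    (G.pivot u v).adjMatrix (ZMod 2) = (G.adjMatrix (ZMod 2)).pivot u v := by
  ext w z
  rw [Matrix.pivot, Matrix.add_apply, Matrix.add_apply, vecMulVec_apply, vecMulVec_apply]
  simp only [col_apply, adjMatrix_add_one_apply]
  by_cases hwz : w = z
  · subst hwz
    simp only [adjMatrix_apply, SimpleGraph.irrefl, if_false, zero_add]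
    rw [mul_comm, CharTwo.add_self_eq_zero]
  · have hadj : (G.pivot u v).Adj w z ↔
        Xor' (Xor' (G.nbr w z) (G.nbr w u ∧ G.nbr z v)) (G.nbr w v ∧ G.nbr z u) :=
      and_iff_right hwz
    have hnbr : G.nbr w z ↔ G.Adj w z := or_iff_right hwz
    simp only [adjMatrix_apply, hadj, ZMod.ite_xor'_eq_add, hnbr, ite_zero_mul_ite_zero, mul_one]

open Classical in
lemma image_swapOn_graphOn_adjMatrix_pivot {G : SimpleGraph V} {u v : V} (huv : G.Adj u v) :
    swapOn {u, v} '' univ.graphOn (G.adjMatrix (ZMod 2)).mulVec =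
      univ.graphOn ((G.pivot u v).adjMatrix (ZMod 2)).mulVec := by
  rw [adjMatrix_pivot]
  exact image_graphOn_univ_of_mapsTo (swapOn_involutive _).injective
    (mapsTo_swapOn_graphOn_pivot (isSymm_adjMatrix G) huv.ne (by simp [huv]) (by simp) (by simp))

omit [Fintype V] [DecidableEq V] in
open Classical in
lemma adjMatrix_injective : Injective fun G : SimpleGraph V => G.adjMatrix (ZMod 2) :=
  fun G H h => by
    ext x y
    have hxy := congrFun (congrFun h x) y
    by_cases hG : G.Adj x y <;> by_cases hH : H.Adj x y <;> simp_all

end SimpleGraph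

lemma pivotSupport_cons {p : V × V} (hp : p.1 ≠ p.2) (φ : List (V × V)) :
    pivotSupport (p :: φ) = {p.1, p.2} ∆ pivotSupport φ := by
  ext x
  simp only [pivotSupport, Finset.mem_filter, Finset.mem_univ, true_and, Finset.mem_symmDiff,
    Finset.mem_insert, Finset.mem_singleton, List.flatMap_cons, List.count_append, List.count_cons,
    List.count_nil]
  by_cases h1 : p.1 = x <;> by_cases h2 : p.2 = x
  · exact absurd (h1.trans h2.symm) hp
  all_goals simp [h1, h2, Ne.symm, Nat.odd_add]

open Classical in
lemma image_swapOn_graphOn_adjMatrix_applyPivots {G : SimpleGraph V} {φ : List (V × V)}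
    (hφ : PivotsApplicable G φ) :
    swapOn (pivotSupport φ) '' univ.graphOn (G.adjMatrix (ZMod 2)).mulVec =
      univ.graphOn ((applyPivots G φ).adjMatrix (ZMod 2)).mulVec := by
  induction φ generalizing G with
  | nil =>
    change _ = univ.graphOn (G.adjMatrix (ZMod 2)).mulVec
    simp [pivotSupport]
  | cons p φ ih =>
    obtain ⟨hp, hφ⟩ := hφ
    rw [applyPivots, ← ih hφ, pivotSupport_cons hp.ne,
      ← SimpleGraph.image_swapOn_graphOn_adjMatrix_pivot hp, image_image]
    simp only [swapOn_swapOn, symmDiff_comm]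

/-- Two applicable sequences of pivots with equal support
yield the same graph. -/
theorem applyPivots_eq_of_support_eq (G : SimpleGraph V) (phi phi' : List (V × V))
    (h : PivotsApplicable G phi) (h' : PivotsApplicable G phi')
    (hs : pivotSupport phi = pivotSupport phi') :
    applyPivots G phi = applyPivots G phi' := by
  refine SimpleGraph.adjMatrix_injective (mulVec_injective (graphOn_univ_injective ?_))
  beta_reduce
  rw [← image_swapOn_graphOn_adjMatrix_applyPivots h,
    ← image_swapOn_graphOn_adjMatrix_applyPivots h', hs]
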